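/- If O ∈ Φ, then every ABox in L_Φ is invariant for L_Φ-bisimulation: if Z is an L_Φ-bisimulation between interpretations I and I', then I satisfies an ABox A (a finite set of assertions of the forms C(a), R(a,b), ¬R(a,b), a = b, a ≠ b) if and only if I' satisfies A. -/

import Mathlib

/-- A set of DL-features (subset of {I, O, Q, U, Self}). -/
structure DLFeat where
  hasI : Bool
  hasO : Bool
  hasQ : Bool
  hasU : Bool
  hasSelf : Bool

/-- An interpretation with concept names `CN`, role names `RN`, individual names `IN`
and domain `D`. -/
structure Interp (CN RN IN : Type) (D : Type) where
  cInt : CN → Set D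
  rInt : RN → D → D → Prop
  iInt : IN → D

/-- Interpretation of a basic role: a role name, possibly inverted. -/
def brInt {CN RN IN D : Type} (I : Interp CN RN IN D) (R : RN × Bool) (x y : D) : Prop :=
  if R.2 then I.rInt R.1 y x else I.rInt R.1 x y

mutual
/-- Concepts of the full language (membership in `L_Φ` is a separate predicate). -/
inductive DLConcept (CN RN IN : Type) : Type where
  | atom (A : CN)
  | top
  | bot
  | neg (C : DLConcept CN RN IN)
  | conj (C D : DLConcept CN RN IN)
  | disj (C D : DLConcept CN RN IN)
  | all (R : DLRole CN RN IN) (C : DLConcept CN RN IN)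
  | ex (R : DLRole CN RN IN) (C : DLConcept CN RN IN)
  | nom (a : IN)
  | atLeast (n : ℕ) (r : RN) (inverted : Bool) (C : DLConcept CN RN IN)
  | atMost (n : ℕ) (r : RN) (inverted : Bool) (C : DLConcept CN RN IN)
  | exSelf (r : RN)
/-- Roles of the full language. -/
inductive DLRole (CN RN IN : Type) : Type where
  | name (r : RN)
  | eps
  | comp (R S : DLRole CN RN IN)
  | runion (R S : DLRole CN RN IN)
  | star (R : DLRole CN RN IN)
  | test (C : DLConcept CN RN IN)
  | inv (r : RN)
  | univ
end

mutual
/-- The concept belongs to the language `L_Φ`. -/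
def DLConcept.inL {CN RN IN : Type} (Φ : DLFeat) : DLConcept CN RN IN → Prop
  | .atom _ => True
  | .top => True
  | .bot => True
  | .neg C => C.inL Φ
  | .conj C D => C.inL Φ ∧ D.inL Φ
  | .disj C D => C.inL Φ ∧ D.inL Φ
  | .all R C => R.inL Φ ∧ C.inL Φ
  | .ex R C => R.inL Φ ∧ C.inL Φ
  | .nom _ => Φ.hasO = true
  | .atLeast _ _ b C => Φ.hasQ = true ∧ (b = true → Φ.hasI = true) ∧ C.inL Φ
  | .atMost _ _ b C => Φ.hasQ = true ∧ (b = true → Φ.hasI = true) ∧ C.inL Φ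
  | .exSelf _ => Φ.hasSelf = true
/-- The role belongs to the language `L_Φ`. -/
def DLRole.inL {CN RN IN : Type} (Φ : DLFeat) : DLRole CN RN IN → Prop
  | .name _ => True
  | .eps => True
  | .comp R S => R.inL Φ ∧ S.inL Φ
  | .runion R S => R.inL Φ ∧ S.inL Φ
  | .star R => R.inL Φ
  | .test C => C.inL Φ
  | .inv _ => Φ.hasI = true
  | .univ => Φ.hasU = true
end

mutual
/-- Semantics of concepts. -/
def DLConcept.sem {CN RN IN D : Type} (I : Interp CN RN IN D) : DLConcept CN RN IN → Set D
  | .atom A => I.cInt A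
  | .top => Set.univ
  | .bot => ∅
  | .neg C => (DLConcept.sem I C)ᶜ
  | .conj C C' => DLConcept.sem I C ∩ DLConcept.sem I C'
  | .disj C C' => DLConcept.sem I C ∪ DLConcept.sem I C'
  | .all R C => {x | ∀ y, DLRole.sem I R x y → y ∈ DLConcept.sem I C}
  | .ex R C => {x | ∃ y, DLRole.sem I R x y ∧ y ∈ DLConcept.sem I C}
  | .nom a => {I.iInt a}
  | .atLeast n r b C =>
      {x | (n : Cardinal) ≤ Cardinal.mk {y // brInt I (r, b) x y ∧ y ∈ DLConcept.sem I C}}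
  | .atMost n r b C =>
      {x | Cardinal.mk {y // brInt I (r, b) x y ∧ y ∈ DLConcept.sem I C} ≤ (n : Cardinal)}
  | .exSelf r => {x | I.rInt r x x}
/-- Semantics of roles. -/
def DLRole.sem {CN RN IN D : Type} (I : Interp CN RN IN D) : DLRole CN RN IN → D → D → Prop
  | .name r => I.rInt r
  | .eps => Eq
  | .comp R S => Relation.Comp (DLRole.sem I R) (DLRole.sem I S)
  | .runion R S => fun x y => DLRole.sem I R x y ∨ DLRole.sem I S x y
  | .star R => Relation.ReflTransGen (DLRole.sem I R)
  | .test C => fun x y => x = y ∧ x ∈ DLConcept.sem I C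
  | .inv r => fun x y => I.rInt r y x
  | .univ => fun _ _ => True
end

/-- `Z` is an `L_Φ`-bisimulation between `I` and `I'`. -/
def Bisim {CN RN IN D D' : Type} (Φ : DLFeat) (I : Interp CN RN IN D)
    (I' : Interp CN RN IN D') (Z : D → D' → Prop) : Prop :=
  (∀ a : IN, Z (I.iInt a) (I'.iInt a)) ∧
  (∀ (A : CN) x x', Z x x' → (x ∈ I.cInt A ↔ x' ∈ I'.cInt A)) ∧
  (∀ (r : RN) x x' y, Z x x' → I.rInt r x y → ∃ y', Z y y' ∧ I'.rInt r x' y') ∧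
  (∀ (r : RN) x x' y', Z x x' → I'.rInt r x' y' → ∃ y, Z y y' ∧ I.rInt r x y) ∧
  (Φ.hasI = true →
    (∀ (r : RN) x x' y, Z x x' → I.rInt r y x → ∃ y', Z y y' ∧ I'.rInt r y' x') ∧
    (∀ (r : RN) x x' y', Z x x' → I'.rInt r y' x' → ∃ y, Z y y' ∧ I.rInt r y x)) ∧
  (Φ.hasO = true → ∀ (a : IN) x x', Z x x' → (x = I.iInt a ↔ x' = I'.iInt a)) ∧
  (Φ.hasQ = true → ∀ (r : RN) x x', Z x x' →
    ∃ h : {y // I.rInt r x y} ≃ {y' // I'.rInt r x' y'}, ∀ y, Z y.1 (h y).1) ∧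
  (Φ.hasQ = true → Φ.hasI = true → ∀ (r : RN) x x', Z x x' →
    ∃ h : {y // I.rInt r y x} ≃ {y' // I'.rInt r y' x'}, ∀ y, Z y.1 (h y).1) ∧
  (Φ.hasU = true → (∀ x, ∃ x', Z x x') ∧ (∀ x', ∃ x, Z x x')) ∧
  (Φ.hasSelf = true → ∀ (r : RN) x x', Z x x' → (I.rInt r x x ↔ I'.rInt r x' x'))

/-- One step along a basic role (role name, or inverse of a role name if `I ∈ Φ`). -/
def basicStep {CN RN IN D : Type} (Φ : DLFeat) (I : Interp CN RN IN D) (x y : D) : Prop :=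
  ∃ r : RN, I.rInt r x y ∨ (Φ.hasI = true ∧ I.rInt r y x)

/-- `I` is unreachable-objects-free: every element is reachable from some named
individual via a finite path of basic-role edges. -/
def UOF {CN RN IN D : Type} (Φ : DLFeat) (I : Interp CN RN IN D) : Prop :=
  ∀ x : D, ∃ a : IN, Relation.ReflTransGen (basicStep Φ I) (I.iInt a) x

/-- `I` validates the GCI `C ⊑ C'`. -/
def satGCI {CN RN IN D : Type} (I : Interp CN RN IN D) (C C' : DLConcept CN RN IN) : Prop :=
  DLConcept.sem I C ⊆ DLConcept.sem I C'

/-- `I` is a model of the TBox `T`. -/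
def modelsTBox {CN RN IN D : Type} (I : Interp CN RN IN D)
    (T : Set (DLConcept CN RN IN × DLConcept CN RN IN)) : Prop :=
  ∀ p ∈ T, satGCI I p.1 p.2

/-- Individual assertions. -/
inductive Assertion (CN RN IN : Type) : Type where
  | conc (C : DLConcept CN RN IN) (a : IN)
  | rolePos (R : DLRole CN RN IN) (a b : IN)
  | roleNeg (R : DLRole CN RN IN) (a b : IN)
  | eq (a b : IN)
  | neq (a b : IN)

/-- The assertion belongs to `L_Φ`. -/
def Assertion.inL {CN RN IN : Type} (Φ : DLFeat) : Assertion CN RN IN → Prop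
  | .conc C _ => C.inL Φ
  | .rolePos R _ _ => R.inL Φ
  | .roleNeg R _ _ => R.inL Φ
  | .eq _ _ => True
  | .neq _ _ => True

/-- `I` satisfies the individual assertion. -/
def Assertion.sat {CN RN IN D : Type} (I : Interp CN RN IN D) : Assertion CN RN IN → Prop
  | .conc C a => I.iInt a ∈ DLConcept.sem I C
  | .rolePos R a b => DLRole.sem I R (I.iInt a) (I.iInt b)
  | .roleNeg R a b => ¬ DLRole.sem I R (I.iInt a) (I.iInt b)
  | .eq a b => I.iInt a = I.iInt b
  | .neq a b => I.iInt a ≠ I.iInt b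

/-- `I` is a model of the ABox `A`. -/
def modelsABox {CN RN IN D : Type} (I : Interp CN RN IN D) (A : Set (Assertion CN RN IN)) : Prop :=
  ∀ φ ∈ A, φ.sat I

/-- A role axiom `R₁ ∘ … ∘ R_k ⊑ r` (`ε ⊑ r` when the list is empty), the `R_i` basic roles. -/
structure RoleAx (RN : Type) where
  lhs : List (RN × Bool)
  rhs : RN

/-- The role axiom is in `L_Φ` (inverse basic roles only if `I ∈ Φ`). -/
def RoleAx.inL {RN : Type} (Φ : DLFeat) (ax : RoleAx RN) : Prop :=
  ∀ p ∈ ax.lhs, p.2 = true → Φ.hasI = true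

/-- Interpretation of a composition chain of basic roles (`ε` for the empty chain). -/
def chainInt {CN RN IN D : Type} (I : Interp CN RN IN D) : List (RN × Bool) → D → D → Prop
  | [] => Eq
  | R :: l => fun x z => ∃ y, brInt I R x y ∧ chainInt I l y z

/-- `I` validates the role axiom. -/
def satRoleAx {CN RN IN D : Type} (I : Interp CN RN IN D) (ax : RoleAx RN) : Prop :=
  ∀ x y, chainInt I ax.lhs x y → I.rInt ax.rhs x y

/-- `I` is a model of the RBox `R`. -/
def modelsRBox {CN RN IN D : Type} (I : Interp CN RN IN D) (R : Set (RoleAx RN)) : Prop :=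
  ∀ ax ∈ R, satRoleAx I ax

/-- `I'` is an r-extension of `I`. -/
def RExt {CN RN IN D : Type} (I I' : Interp CN RN IN D) : Prop :=
  I'.cInt = I.cInt ∧ I'.iInt = I.iInt ∧ ∀ (r : RN) x y, I.rInt r x y → I'.rInt r x y

/-- `I'` is the least r-extension of `I` validating the RBox `R`. -/
def LeastRExt {CN RN IN D : Type} (I : Interp CN RN IN D) (R : Set (RoleAx RN))
    (I' : Interp CN RN IN D) : Prop :=
  RExt I I' ∧ modelsRBox I' R ∧
    ∀ I'' : Interp CN RN IN D, RExt I I'' → modelsRBox I'' R →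
      ∀ (r : RN) x y, I'.rInt r x y → I''.rInt r x y

/-- `I` is finitely branching w.r.t. `L_Φ`. -/
def FinBranch {CN RN IN D : Type} (Φ : DLFeat) (I : Interp CN RN IN D) : Prop :=
  ∀ (r : RN) (x : D), {y | I.rInt r x y}.Finite ∧ (Φ.hasI = true → {y | I.rInt r y x}.Finite)

/-- `x` and `x'` are `L_Φ`-equivalent: they satisfy the same concepts of `L_Φ`. -/
def LEquiv {CN RN IN D D' : Type} (Φ : DLFeat) (I : Interp CN RN IN D)
    (I' : Interp CN RN IN D') (x : D) (x' : D') : Prop :=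
  ∀ C : DLConcept CN RN IN, C.inL Φ → (x ∈ DLConcept.sem I C ↔ x' ∈ DLConcept.sem I' C)

/-- The largest `L_Φ`-auto-bisimulation of `I` (union of all auto-bisimulations). -/
def gbisim {CN RN IN D : Type} (Φ : DLFeat) (I : Interp CN RN IN D) (x y : D) : Prop :=
  ∃ Z, Bisim Φ I I Z ∧ Z x y

/-- The quotient interpretation of `I` w.r.t. the largest `L_Φ`-auto-bisimulation. -/
def quotInterp {CN RN IN D : Type} (Φ : DLFeat) (I : Interp CN RN IN D) :
    Interp CN RN IN (Quot (gbisim Φ I)) where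
  cInt A := {q | ∃ x, Quot.mk _ x = q ∧ x ∈ I.cInt A}
  rInt r q q' := ∃ x y, Quot.mk _ x = q ∧ Quot.mk _ y = q' ∧ I.rInt r x y
  iInt a := Quot.mk _ (I.iInt a)

/-- A QS-interpretation: an interpretation together with multiplicity functions for
basic roles and self-loop sets for role names. -/
structure QSInterp (CN RN IN D : Type) where
  toInterp : Interp CN RN IN D
  QU : (RN × Bool) → D → D → ℕ
  SE : RN → Set D

/-- The defining positivity condition of QS-interpretations:
`QU R x y > 0` iff `R` connects `x` to `y`. -/
def QSInterp.Proper {CN RN IN D : Type} (J : QSInterp CN RN IN D) : Prop :=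
  ∀ (R : RN × Bool) x y, 0 < J.QU R x y ↔ brInt J.toInterp R x y

/-- `Σ {f y : y ∈ S}` as an extended natural number. -/
noncomputable def qsum {D : Type} (f : D → ℕ) (S : Set D) : ℕ∞ :=
  ⨆ (s : Finset D) (_ : ↑s ⊆ S), (∑ y ∈ s, f y : ℕ∞)

mutual
/-- Semantics of concepts in a QS-interpretation. -/
noncomputable def DLConcept.qsem {CN RN IN D : Type} (J : QSInterp CN RN IN D) :
    DLConcept CN RN IN → Set D
  | .atom A => J.toInterp.cInt A
  | .top => Set.univ
  | .bot => ∅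
  | .neg C => (DLConcept.qsem J C)ᶜ
  | .conj C C' => DLConcept.qsem J C ∩ DLConcept.qsem J C'
  | .disj C C' => DLConcept.qsem J C ∪ DLConcept.qsem J C'
  | .all R C => {x | ∀ y, DLRole.qsem J R x y → y ∈ DLConcept.qsem J C}
  | .ex R C => {x | ∃ y, DLRole.qsem J R x y ∧ y ∈ DLConcept.qsem J C}
  | .nom a => {J.toInterp.iInt a}
  | .atLeast n r b C => {x | (n : ℕ∞) ≤ qsum (J.QU (r, b) x) (DLConcept.qsem J C)}
  | .atMost n r b C => {x | qsum (J.QU (r, b) x) (DLConcept.qsem J C) ≤ (n : ℕ∞)}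
  | .exSelf r => J.SE r
/-- Semantics of roles in a QS-interpretation. -/
noncomputable def DLRole.qsem {CN RN IN D : Type} (J : QSInterp CN RN IN D) :
    DLRole CN RN IN → D → D → Prop
  | .name r => J.toInterp.rInt r
  | .eps => Eq
  | .comp R S => Relation.Comp (DLRole.qsem J R) (DLRole.qsem J S)
  | .runion R S => fun x y => DLRole.qsem J R x y ∨ DLRole.qsem J S x y
  | .star R => Relation.ReflTransGen (DLRole.qsem J R)
  | .test C => fun x y => x = y ∧ x ∈ DLConcept.qsem J C
  | .inv r => fun x y => J.toInterp.rInt r y x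
  | .univ => fun _ _ => True
end

/-- The quotient QS-interpretation of a traditional interpretation `I` w.r.t. the
largest `L_Φ`-auto-bisimulation. -/
noncomputable def qsQuot {CN RN IN D : Type} (Φ : DLFeat) (I : Interp CN RN IN D) :
    QSInterp CN RN IN (Quot (gbisim Φ I)) where
  toInterp := quotInterp Φ I
  QU R q q' := sSup {n | ∃ x, Quot.mk _ x = q ∧
    n = Set.ncard {y | Quot.mk (gbisim Φ I) y = q' ∧ brInt I R x y}}
  SE r := {q | ∃ x, Quot.mk _ x = q ∧ I.rInt r x x}

/-! Bisimulation invariance of concepts and safety of complex roles are proved by one simultaneous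
induction; the backward (zag) direction is the forward one for the converse bisimulation `flip Z`.
With nominals, the `Z`-partner of a named individual `a^I` can only be `a^I'`, so role assertions
and (in)equalities between named individuals transfer as well. -/

theorem Cardinal.mk_and_mem_eq_of_equiv {D D' : Type} {Z : D → D' → Prop} {p : D → Prop}
    {p' : D' → Prop} {S : Set D} {S' : Set D'} (e : {y // p y} ≃ {y' // p' y'})
    (he : ∀ y, Z y.1 (e y).1) (hS : ∀ y y', Z y y' → (y ∈ S ↔ y' ∈ S')) :
    Cardinal.mk {y // p y ∧ y ∈ S} = Cardinal.mk {y' // p' y' ∧ y' ∈ S'} :=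
  Cardinal.mk_congr <| (Equiv.subtypeSubtypeEquivSubtypeInter p (· ∈ S)).symm.trans <|
    (e.subtypeEquiv fun y => hS y.1 (e y).1 (he y)).trans
      (Equiv.subtypeSubtypeEquivSubtypeInter p' (· ∈ S'))

namespace Bisim

variable {CN RN IN : Type} {Φ : DLFeat}

section

variable {D D' : Type} {I : Interp CN RN IN D} {I' : Interp CN RN IN D'}
  {Z : D → D' → Prop}

theorem rel_iInt (h : Bisim Φ I I' Z) (a : IN) : Z (I.iInt a) (I'.iInt a) :=
  h.1 a

theorem mem_cInt_iff (h : Bisim Φ I I' Z) (A : CN) {x : D} {x' : D'} (hx : Z x x') :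
    x ∈ I.cInt A ↔ x' ∈ I'.cInt A :=
  h.2.1 A x x' hx

theorem forth (h : Bisim Φ I I' Z) (r : RN) {x : D} {x' : D'} {y : D} (hx : Z x x')
    (hxy : I.rInt r x y) : ∃ y', Z y y' ∧ I'.rInt r x' y' :=
  h.2.2.1 r x x' y hx hxy

theorem forth_inv (h : Bisim Φ I I' Z) (hI : Φ.hasI = true) (r : RN) {x : D} {x' : D'} {y : D}
    (hx : Z x x') (hyx : I.rInt r y x) : ∃ y', Z y y' ∧ I'.rInt r y' x' :=
  (h.2.2.2.2.1 hI).1 r x x' y hx hyx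

theorem eq_iInt_iff (h : Bisim Φ I I' Z) (hO : Φ.hasO = true) (a : IN) {x : D} {x' : D'}
    (hx : Z x x') : x = I.iInt a ↔ x' = I'.iInt a :=
  h.2.2.2.2.2.1 hO a x x' hx

theorem exists_equiv_brInt (h : Bisim Φ I I' Z) (hQ : Φ.hasQ = true) (r : RN) (b : Bool)
    (hb : b = true → Φ.hasI = true) {x : D} {x' : D'} (hx : Z x x') :
    ∃ e : {y // brInt I (r, b) x y} ≃ {y' // brInt I' (r, b) x' y'}, ∀ y, Z y.1 (e y).1 := by
  cases b
  · exact h.2.2.2.2.2.2.1 hQ r x x' hx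
  · exact h.2.2.2.2.2.2.2.1 hQ (hb rfl) r x x' hx

theorem exists_rel (h : Bisim Φ I I' Z) (hU : Φ.hasU = true) (x : D) : ∃ x', Z x x' :=
  (h.2.2.2.2.2.2.2.2.1 hU).1 x

theorem rInt_self_iff (h : Bisim Φ I I' Z) (hSelf : Φ.hasSelf = true) (r : RN) {x : D}
    {x' : D'} (hx : Z x x') : I.rInt r x x ↔ I'.rInt r x' x' :=
  h.2.2.2.2.2.2.2.2.2 hSelf r x x' hx

theorem symm (h : Bisim Φ I I' Z) : Bisim Φ I' I (flip Z) := by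
  obtain ⟨hind, hatom, hforth, hback, hinv, hnom, hcount, hcount_inv, huniv, hself⟩ := h
  refine ⟨hind, fun A x' x hx => (hatom A x x' hx).symm, fun r x' x y' hx hxy =>
    hback r x x' y' hx hxy, fun r x' x y hx hxy => hforth r x x' y hx hxy,
    fun hI => ⟨fun r x' x y' hx hyx => (hinv hI).2 r x x' y' hx hyx,
      fun r x' x y hx hyx => (hinv hI).1 r x x' y hx hyx⟩,
    fun hO a x' x hx => (hnom hO a x x' hx).symm, fun hQ r x' x hx => ?_,
    fun hQ hI r x' x hx => ?_, fun hU => (huniv hU).symm,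
    fun hSelf r x' x hx => (hself hSelf r x x' hx).symm⟩
  · obtain ⟨e, he⟩ := hcount hQ r x x' hx
    exact ⟨e.symm, fun y' => by simpa [flip] using he (e.symm y')⟩
  · obtain ⟨e, he⟩ := hcount_inv hQ hI r x x' hx
    exact ⟨e.symm, fun y' => by simpa [flip] using he (e.symm y')⟩

end

mutual

theorem mem_sem_iff {D D' : Type} {I : Interp CN RN IN D} {I' : Interp CN RN IN D'}
    {Z : D → D' → Prop} (h : Bisim Φ I I' Z) :
    ∀ (C : DLConcept CN RN IN), C.inL Φ → ∀ {x : D} {x' : D'}, Z x x' →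
      (x ∈ C.sem I ↔ x' ∈ C.sem I')
  | .atom A, _, _, _, hx => h.mem_cInt_iff A hx
  | .top, _, _, _, _ => Iff.rfl
  | .bot, _, _, _, _ => Iff.rfl
  | .neg C, hC, _, _, hx => (h.mem_sem_iff C hC hx).not
  | .conj C C', hC, _, _, hx => and_congr (h.mem_sem_iff C hC.1 hx) (h.mem_sem_iff C' hC.2 hx)
  | .disj C C', hC, _, _, hx => or_congr (h.mem_sem_iff C hC.1 hx) (h.mem_sem_iff C' hC.2 hx)
  | .all R C, ⟨hR, hC⟩, _, _, hx => by
    constructor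
    · intro hall y' hxy'
      obtain ⟨y, hy, hxy⟩ := h.symm.exists_sem_of_sem R hR hx hxy'
      exact (h.mem_sem_iff C hC hy).mp (hall y hxy)
    · intro hall y hxy
      obtain ⟨y', hy, hxy'⟩ := h.exists_sem_of_sem R hR hx hxy
      exact (h.mem_sem_iff C hC hy).mpr (hall y' hxy')
  | .ex R C, ⟨hR, hC⟩, _, _, hx => by
    constructor
    · rintro ⟨y, hxy, hyC⟩
      obtain ⟨y', hy, hxy'⟩ := h.exists_sem_of_sem R hR hx hxy
      exact ⟨y', hxy', (h.mem_sem_iff C hC hy).mp hyC⟩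
    · rintro ⟨y', hxy', hyC⟩
      obtain ⟨y, hy, hxy⟩ := h.symm.exists_sem_of_sem R hR hx hxy'
      exact ⟨y, hxy, (h.mem_sem_iff C hC hy).mpr hyC⟩
  | .nom a, hO, _, _, hx => h.eq_iInt_iff hO a hx
  | .atLeast n r b C, ⟨hQ, hb, hC⟩, _, _, hx => by
    obtain ⟨e, he⟩ := h.exists_equiv_brInt hQ r b hb hx
    simp only [DLConcept.sem, Set.mem_ofPred_eq,
      Cardinal.mk_and_mem_eq_of_equiv e he fun y y' hy => h.mem_sem_iff C hC hy]
  | .atMost n r b C, ⟨hQ, hb, hC⟩, _, _, hx => by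
    obtain ⟨e, he⟩ := h.exists_equiv_brInt hQ r b hb hx
    simp only [DLConcept.sem, Set.mem_ofPred_eq,
      Cardinal.mk_and_mem_eq_of_equiv e he fun y y' hy => h.mem_sem_iff C hC hy]
  | .exSelf r, hSelf, _, _, hx => h.rInt_self_iff hSelf r hx

theorem exists_sem_of_sem {D D' : Type} {I : Interp CN RN IN D} {I' : Interp CN RN IN D'}
    {Z : D → D' → Prop} (h : Bisim Φ I I' Z) :
    ∀ (R : DLRole CN RN IN), R.inL Φ → ∀ {x : D} {x' : D'} {y : D}, Z x x' → R.sem I x y →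
      ∃ y', Z y y' ∧ R.sem I' x' y'
  | .name r, _, _, _, _, hx, hxy => h.forth r hx hxy
  | .eps, _, _, x', _, hx, rfl => ⟨x', hx, rfl⟩
  | .comp R S, hRS, _, _, _, hx, ⟨z, hxz, hzy⟩ => by
    obtain ⟨z', hz, hxz'⟩ := h.exists_sem_of_sem R hRS.1 hx hxz
    obtain ⟨y', hy, hzy'⟩ := h.exists_sem_of_sem S hRS.2 hz hzy
    exact ⟨y', hy, z', hxz', hzy'⟩
  | .runion R S, hRS, _, _, _, hx, .inl hxy => by
    obtain ⟨y', hy, hxy'⟩ := h.exists_sem_of_sem R hRS.1 hx hxy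
    exact ⟨y', hy, .inl hxy'⟩
  | .runion R S, hRS, _, _, _, hx, .inr hxy => by
    obtain ⟨y', hy, hxy'⟩ := h.exists_sem_of_sem S hRS.2 hx hxy
    exact ⟨y', hy, .inr hxy'⟩
  | .star R, hR, _, x', _, hx, hxy => by
    induction hxy with
    | refl => exact ⟨x', hx, .refl⟩
    | tail _ hzy ih =>
      obtain ⟨z', hz, hxz'⟩ := ih
      obtain ⟨y', hy, hzy'⟩ := h.exists_sem_of_sem R hR hz hzy
      exact ⟨y', hy, hxz'.tail hzy'⟩
  | .test C, hC, _, x', _, hx, ⟨rfl, hxC⟩ => ⟨x', hx, rfl, (h.mem_sem_iff C hC hx).mp hxC⟩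
  | .inv r, hI, _, _, _, hx, hyx => h.forth_inv hI r hx hyx
  | .univ, hU, _, _, y, _, _ => (h.exists_rel hU y).imp fun _ hy => ⟨hy, trivial⟩

end

theorem sem_iInt_of_sem {D D' : Type} {I : Interp CN RN IN D} {I' : Interp CN RN IN D'}
    {Z : D → D' → Prop} (h : Bisim Φ I I' Z) (hO : Φ.hasO = true) {R : DLRole CN RN IN}
    (hR : R.inL Φ) {a b : IN} (hab : R.sem I (I.iInt a) (I.iInt b)) :
    R.sem I' (I'.iInt a) (I'.iInt b) := by
  obtain ⟨y', hy, hay'⟩ := h.exists_sem_of_sem R hR (h.rel_iInt a) hab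
  rwa [(h.eq_iInt_iff hO b hy).mp rfl] at hay'

theorem sem_iInt_iff {D D' : Type} {I : Interp CN RN IN D} {I' : Interp CN RN IN D'}
    {Z : D → D' → Prop} (h : Bisim Φ I I' Z) (hO : Φ.hasO = true) {R : DLRole CN RN IN}
    (hR : R.inL Φ) (a b : IN) :
    R.sem I (I.iInt a) (I.iInt b) ↔ R.sem I' (I'.iInt a) (I'.iInt b) :=
  ⟨h.sem_iInt_of_sem hO hR, h.symm.sem_iInt_of_sem hO hR⟩

theorem sat_iff {D D' : Type} {I : Interp CN RN IN D} {I' : Interp CN RN IN D'}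
    {Z : D → D' → Prop} (h : Bisim Φ I I' Z) (hO : Φ.hasO = true) :
    ∀ φ : Assertion CN RN IN, φ.inL Φ → (φ.sat I ↔ φ.sat I')
  | .conc C a, hC => h.mem_sem_iff C hC (h.rel_iInt a)
  | .rolePos _ a b, hR => h.sem_iInt_iff hO hR a b
  | .roleNeg _ a b, hR => (h.sem_iInt_iff hO hR a b).not
  | .eq a b, _ => h.eq_iInt_iff hO b (h.rel_iInt a)
  | .neq a b, _ => (h.eq_iInt_iff hO b (h.rel_iInt a)).not

end Bisim

/-- If `O ∈ Φ`, every ABox in `L_Φ` is invariant for `L_Φ`-bisimulation. -/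
theorem abox_invariance_nominal {CN RN IN D D' : Type} (Φ : DLFeat) (hO : Φ.hasO = true)
    (I : Interp CN RN IN D) (I' : Interp CN RN IN D')
    (A : Set (Assertion CN RN IN)) (hfin : A.Finite) (hA : ∀ φ ∈ A, φ.inL Φ)
    (Z : D → D' → Prop) (h : Bisim Φ I I' Z) :
    modelsABox I A ↔ modelsABox I' A :=
  forall₂_congr fun φ hφ => h.sat_iff hO φ (hA φ hφ)
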